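/- Let λ > 0, a > 0, s ≥ 0, and τ ≥ 0 be real numbers. Then the infimum over ρ ∈ (0, λ/a) of the function ρ ↦ τ²/(4ρ) + s/(ρ⁻¹ − a/λ) equals τ²·a/(4λ) + τ·√s. -/

import Mathlib

open MeasureTheory Matrix
open scoped ENNReal NNReal RealInnerProductSpace Matrix.Norms.L2Operator

noncomputable section

def IsCoupling {α β : Type*} [MeasurableSpace α] [MeasurableSpace β]
    (π : Measure (α × β)) (P : Measure α) (Q : Measure β) : Prop :=
  π.fst = P ∧ π.snd = Q

noncomputable def W2sq {E : Type*} [SubtractionMonoid E] [MeasurableSpace E]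
    (c : E → ℝ) (P Q : Measure E) : ℝ≥0∞ :=
  ⨅ π ∈ {π : Measure (E × E) | IsCoupling π P Q},
    ∫⁻ ξ, ENNReal.ofReal ((c (ξ.1 - ξ.2)) ^ 2) ∂π

def FiniteSecondMoment {E : Type*} [NormedAddCommGroup E] [MeasurableSpace E]
    (P : Measure E) : Prop :=
  Integrable (fun x => ‖x‖ ^ 2) P

def ambiguitySet {E : Type*} [NormedAddCommGroup E] [MeasurableSpace E]
    (c : E → ℝ) (ε : ℝ) (P : Measure E) : Set (Measure E) :=
  {Q | IsProbabilityMeasure Q ∧ FiniteSecondMoment Q ∧ W2sq c Q P ≤ ENNReal.ofReal (ε ^ 2)}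

noncomputable def mulVecMap {m d : ℕ} (A : Matrix (Fin m) (Fin d) ℝ) :
    EuclideanSpace ℝ (Fin d) → EuclideanSpace ℝ (Fin m) :=
  fun x => (EuclideanSpace.equiv (Fin m) ℝ).symm (A.mulVec ((EuclideanSpace.equiv (Fin d) ℝ) x))

noncomputable def meanVec {d : ℕ} (P : Measure (EuclideanSpace ℝ (Fin d))) :
    EuclideanSpace ℝ (Fin d) :=
  ∫ x, x ∂P

noncomputable def covMatrix {d : ℕ} (P : Measure (EuclideanSpace ℝ (Fin d))) :
    Matrix (Fin d) (Fin d) ℝ :=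
  Matrix.of fun i j => ∫ x, (x i - meanVec P i) * (x j - meanVec P j) ∂P

open scoped Classical in
noncomputable def psdSqrt {d : ℕ} (M : Matrix (Fin d) (Fin d) ℝ) : Matrix (Fin d) (Fin d) ℝ :=
  if h : M.PosSemidef then
    (h.1.eigenvectorUnitary : Matrix (Fin d) (Fin d) ℝ) *
      Matrix.diagonal (fun i => Real.sqrt (h.1.eigenvalues i)) *
      (star (h.1.eigenvectorUnitary : Matrix (Fin d) (Fin d) ℝ))
  else 0

noncomputable def gelbrichSq {d : ℕ} (μ1 : EuclideanSpace ℝ (Fin d))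
    (S1 : Matrix (Fin d) (Fin d) ℝ) (μ2 : EuclideanSpace ℝ (Fin d))
    (S2 : Matrix (Fin d) (Fin d) ℝ) : ℝ :=
  ‖μ1 - μ2‖ ^ 2 + (S1 + S2 - (2 : ℝ) • psdSqrt (psdSqrt S1 * S2 * psdSqrt S1)).trace

noncomputable def CVaR {E : Type*} [MeasurableSpace E] (γ : ℝ) (P : Measure E) (f : E → ℝ) : ℝ :=
  ⨅ τ : ℝ, τ + (1 / γ) * ∫ x, max (f x - τ) 0 ∂P

-- STATEMENT 9
private lemma key9 (s τ : ℝ) (hs : 0 ≤ s) {t : ℝ} (ht : 0 < t) :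
    τ * Real.sqrt s ≤ τ ^ 2 * t / 4 + s / t := by
  have h1 : τ * Real.sqrt s * t ≤ τ ^ 2 * t ^ 2 / 4 + s := by
    nlinarith [sq_nonneg (τ * t / 2 - Real.sqrt s), Real.sq_sqrt hs]
  have h2 : τ * Real.sqrt s ≤ (τ ^ 2 * t ^ 2 / 4 + s) / t := (le_div_iff₀ ht).mpr h1
  have h3 : (τ ^ 2 * t ^ 2 / 4 + s) / t = τ ^ 2 * t / 4 + s / t := by
    field_simp
  linarith [h3 ▸ h2]

private lemma elem9 (lam a s τ : ℝ) (hlam : 0 < lam) (ha : 0 < a) {t : ℝ} (ht : 0 < t) :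
    ∃ ρ ∈ Set.Ioo (0 : ℝ) (lam / a),
      τ ^ 2 / (4 * ρ) + s / (ρ⁻¹ - a / lam)
        = τ ^ 2 * a / (4 * lam) + (τ ^ 2 * t / 4 + s / t) := by
  have hA : 0 < a / lam := div_pos ha hlam
  refine ⟨(t + a / lam)⁻¹, ⟨inv_pos.mpr (by linarith), ?_⟩, ?_⟩
  · have h1 : (t + a / lam)⁻¹ < (a / lam)⁻¹ := by
      apply inv_strictAnti₀ hA; linarith
    rwa [inv_div] at h1
  · have hinv : ((t + a / lam)⁻¹)⁻¹ = t + a / lam := inv_inv _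
    rw [hinv]
    have h2 : t + a / lam - a / lam = t := by ring
    rw [h2]
    have hne : (t + a / lam) ≠ 0 := by positivity
    rw [div_eq_mul_inv, mul_inv, inv_inv]
    field_simp
    ring

theorem stmt9 (lam a s τ : ℝ) (hlam : 0 < lam) (ha : 0 < a) (hs : 0 ≤ s) (hτ : 0 ≤ τ) :
    IsGLB {r : ℝ | ∃ ρ ∈ Set.Ioo (0 : ℝ) (lam / a), r = τ ^ 2 / (4 * ρ) + s / (ρ⁻¹ - a / lam)}
      (τ ^ 2 * a / (4 * lam) + τ * Real.sqrt s) := by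
  constructor
  · rintro r ⟨ρ, ⟨hρ0, hρ1⟩, rfl⟩
    have ht : 0 < ρ⁻¹ - a / lam := by
      have h1 : ρ * a < lam := (lt_div_iff₀ ha).mp hρ1
      have h2 : a / lam < 1 / ρ := by
        rw [div_lt_div_iff₀ hlam hρ0]; nlinarith
      rw [one_div] at h2
      linarith
    set t := ρ⁻¹ - a / lam with htdef
    have hρinv : ρ⁻¹ = t + a / lam := by rw [htdef]; ring
    have hsplit : τ ^ 2 / (4 * ρ) = τ ^ 2 * a / (4 * lam) + τ ^ 2 * t / 4 := by
      rw [div_eq_mul_inv, mul_inv, hρinv]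
      field_simp
      ring
    rw [hsplit]
    have := key9 s τ hs ht
    linarith
  · intro b hb
    apply le_of_forall_pos_le_add
    intro ε hε
    have hbound : ∃ t : ℝ, 0 < t ∧ τ ^ 2 * t / 4 + s / t ≤ τ * Real.sqrt s + ε := by
      by_cases hτ0 : τ = 0
      · refine ⟨(s + ε) / ε, div_pos (by linarith) hε, ?_⟩
        rw [hτ0]
        have h1 : s / ((s + ε) / ε) ≤ ε := by
          rw [div_le_iff₀ (div_pos (by linarith) hε)]
          field_simp
          nlinarith
        simp only [ne_eq, zero_pow, zero_mul]
        nlinarith [Real.sqrt_nonneg s, h1]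
      · have hτp : 0 < τ := lt_of_le_of_ne hτ (Ne.symm hτ0)
        by_cases hs0 : s = 0
        · refine ⟨4 * ε / τ ^ 2, by positivity, ?_⟩
          rw [hs0]
          have h1 : τ ^ 2 * (4 * ε / τ ^ 2) / 4 = ε := by field_simp
          rw [h1, Real.sqrt_zero, zero_div]
          nlinarith
        · have hsp : 0 < s := lt_of_le_of_ne hs (Ne.symm hs0)
          have hq : 0 < Real.sqrt s := Real.sqrt_pos.mpr hsp
          have hq2 : Real.sqrt s ^ 2 = s := Real.sq_sqrt hs
          refine ⟨2 * Real.sqrt s / τ, by positivity, ?_⟩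
          have h1 : τ ^ 2 * (2 * Real.sqrt s / τ) / 4 = τ * Real.sqrt s / 2 := by
            field_simp; ring
          have h2 : s / (2 * Real.sqrt s / τ) = τ * Real.sqrt s / 2 := by
            rw [div_div_eq_mul_div, div_eq_div_iff (by positivity) (by norm_num)]; linear_combination (-2*τ)*hq2
          rw [h1, h2]; linarith
    obtain ⟨t, ht, hbt⟩ := hbound
    obtain ⟨ρ, hmem, hval⟩ := elem9 lam a s τ hlam ha ht
    have hble := hb ⟨ρ, hmem, rfl⟩
    rw [hval] at hble
    linarith

end
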